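/- arXiv:2010.02425 — 2 statements merged into one kernel-verified Lean document; each statement's English description precedes it below -/
import Mathlib

section
/- Let 𝒫 be a set of probability measures and let k-mix(𝒫) = { Σ_{i=1}^k w_i p_i : w ∈ Δ_k, p_i ∈ 𝒫 }. Then for all ε, δ > 0, N(k-mix(𝒫), ε + δ) ≤ N(𝒫, ε)^k · N(Δ_k, δ), where covering numbers are with respect to the total variation norm (and ℓ¹-norm on Δ_k). -/
/-!
Cover `k`-mix(P) by the mixtures `∑ i, w' i * q i` with `w'` in the simplex cover and each `q i`
in the cover of `P`. Approximating `∑ i, w i * p i` by such a mixture, the error splits as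
`w i (p i - q i) + (w i - w' i) q i`; since the `q i` are densities, integrating the second part
gives exactly the `ℓ¹` distance `∑ i, |w i - w' i| ≤ δ`, while the first part costs at most
`∑ i, w i ε = ε`.
-/

open Finset MeasureTheory

/-- `w` is a probability vector: nonnegative entries summing to 1. -/
def IsProbVec {k : ℕ} (w : Fin k → ℝ) : Prop :=
  (∀ i, 0 ≤ w i) ∧ ∑ i, w i = 1

/-- `p` is a probability density with respect to `μ`. -/
def IsDensity {Ω : Type*} [MeasurableSpace Ω] (μ : Measure Ω) (p : Ω → ℝ) : Prop :=
  Measurable p ∧ (∀ ω, 0 ≤ p ω) ∧ ∫ ω, p ω ∂μ = 1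

/-- `k`-mixtures of a family of densities. -/
def kMix {Ω : Type*} [MeasurableSpace Ω] (k : ℕ) (P : Set (Ω → ℝ)) : Set (Ω → ℝ) :=
  {f | ∃ w : Fin k → ℝ, IsProbVec w ∧ ∃ p : Fin k → Ω → ℝ,
    (∀ i, p i ∈ P) ∧ f = fun ω => ∑ i, w i * p i ω}

lemma abs_mul_sub_mul_le_of_nonneg {α : Type*} [CommRing α] [LinearOrder α] [IsOrderedRing α]
    {a b x y : α} (ha : 0 ≤ a) (hy : 0 ≤ y) :
    |a * x - b * y| ≤ a * |x - y| + |a - b| * y := by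
  calc |a * x - b * y| = |a * (x - y) + (a - b) * y| := by congr 1; ring
    _ ≤ |a * (x - y)| + |(a - b) * y| := abs_add_le _ _
    _ = a * |x - y| + |a - b| * y := by rw [abs_mul, abs_mul, abs_of_nonneg ha, abs_of_nonneg hy]

section Mixture

variable {ι Ω : Type*} [Fintype ι]

lemma abs_sum_mul_sub_sum_mul_le {w w' : ι → ℝ} {p q : ι → Ω → ℝ} (hw : ∀ i, 0 ≤ w i)
    (hq : ∀ i ω, 0 ≤ q i ω) (ω : Ω) :
    |∑ i, w i * p i ω - ∑ i, w' i * q i ω| ≤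
      ∑ i, (w i * |p i ω - q i ω| + |w i - w' i| * q i ω) := by
  rw [← sum_sub_distrib]
  exact (abs_sum_le_sum_abs _ _).trans
    (sum_le_sum fun i _ => abs_mul_sub_mul_le_of_nonneg (hw i) (hq i ω))

lemma integral_abs_sum_mul_sub_sum_mul_le [MeasurableSpace Ω] {μ : Measure Ω}
    {w w' : ι → ℝ} {p q : ι → Ω → ℝ}
    (hw : ∀ i, 0 ≤ w i) (hp : ∀ i, Integrable (p i) μ) (hqi : ∀ i, Integrable (q i) μ)
    (hq : ∀ i ω, 0 ≤ q i ω) (hq_one : ∀ i, ∫ ω, q i ω ∂μ = 1) :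
    ∫ ω, |∑ i, w i * p i ω - ∑ i, w' i * q i ω| ∂μ ≤
      ∑ i, w i * ∫ ω, |p i ω - q i ω| ∂μ + ∑ i, |w i - w' i| := by
  have hdist i : Integrable (fun ω => w i * |p i ω - q i ω|) μ :=
    ((hp i).sub (hqi i)).abs.const_mul _
  have hweight i : Integrable (fun ω => |w i - w' i| * q i ω) μ := (hqi i).const_mul _
  have hbound i : Integrable (fun ω => w i * |p i ω - q i ω| + |w i - w' i| * q i ω) μ :=
    (hdist i).add (hweight i)
  calc ∫ ω, |∑ i, w i * p i ω - ∑ i, w' i * q i ω| ∂μ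
      ≤ ∫ ω, ∑ i, (w i * |p i ω - q i ω| + |w i - w' i| * q i ω) ∂μ :=
        integral_mono_of_nonneg (.of_forall fun _ => abs_nonneg _)
          (integrable_finsetSum _ fun i _ => hbound i)
          (.of_forall (abs_sum_mul_sub_sum_mul_le hw hq))
    _ = ∑ i, w i * ∫ ω, |p i ω - q i ω| ∂μ + ∑ i, |w i - w' i| := by
        rw [integral_finsetSum _ fun i _ => hbound i, ← sum_add_distrib]
        refine sum_congr rfl fun i _ => ?_
        rw [integral_add (hdist i) (hweight i), integral_const_mul, integral_const_mul,
          hq_one i, mul_one]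

end Mixture

lemma IsProbVec.sum_mul_le {k : ℕ} {w a : Fin k → ℝ} {ε : ℝ} (hw : IsProbVec w)
    (ha : ∀ i, a i ≤ ε) : ∑ i, w i * a i ≤ ε :=
  calc ∑ i, w i * a i ≤ ∑ i, w i * ε :=
        sum_le_sum fun i _ => mul_le_mul_of_nonneg_left (ha i) (hw.1 i)
    _ = ε := by rw [← sum_mul, hw.2, one_mul]

noncomputable def mixtureFinset {Ω : Type*} {k : ℕ} (W : Finset (Fin k → ℝ))
    (C : Finset (Ω → ℝ)) : Finset (Ω → ℝ) :=
  open Classical in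
  (W ×ˢ Fintype.piFinset fun _ : Fin k => C).image
    fun wq => fun ω => ∑ i, wq.1 i * wq.2 i ω

section MixtureFinset

variable {Ω : Type*} {k : ℕ} {W : Finset (Fin k → ℝ)} {C : Finset (Ω → ℝ)}

lemma mem_mixtureFinset {f : Ω → ℝ} :
    f ∈ mixtureFinset W C ↔
      ∃ w ∈ W, ∃ q : Fin k → Ω → ℝ, (∀ i, q i ∈ C) ∧ f = fun ω => ∑ i, w i * q i ω := by
  classical
  simp only [mixtureFinset, mem_image, mem_product, Fintype.mem_piFinset, Prod.exists]
  constructor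
  · rintro ⟨w, q, ⟨hw, hq⟩, rfl⟩
    exact ⟨w, hw, q, hq, rfl⟩
  · rintro ⟨w, hw, q, hq, rfl⟩
    exact ⟨w, q, ⟨hw, hq⟩, rfl⟩

lemma card_mixtureFinset_le : (mixtureFinset W C).card ≤ C.card ^ k * W.card := by
  classical
  calc (mixtureFinset W C).card ≤ (W ×ˢ Fintype.piFinset fun _ : Fin k => C).card :=
        card_image_le
    _ = C.card ^ k * W.card := by
        rw [card_product, Fintype.card_piFinset, prod_const, card_univ, Fintype.card_fin,
          mul_comm]

lemma mixtureFinset_subset_kMix [MeasurableSpace Ω] {P : Set (Ω → ℝ)}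
    (hW : ∀ w ∈ W, IsProbVec w) (hC : ∀ q ∈ C, q ∈ P) :
    (mixtureFinset W C : Set (Ω → ℝ)) ⊆ kMix k P := by
  intro f hf
  obtain ⟨w, hw, q, hq, rfl⟩ := mem_mixtureFinset.1 hf
  exact ⟨w, hW w hw, q, fun i => hC _ (hq i), rfl⟩

end MixtureFinset

theorem kmix_cover_general {Ω : Type*} [MeasurableSpace Ω] (μ : Measure Ω)
    (k : ℕ) (P : Set (Ω → ℝ)) (hP : ∀ p ∈ P, IsDensity μ p)
    (hInt : ∀ p ∈ P, Integrable p μ)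
    (ε δ : ℝ)
    (C : Finset (Ω → ℝ)) (hCmem : ∀ q ∈ C, q ∈ P)
    (hCcover : ∀ p ∈ P, ∃ q ∈ C, ∫ ω, |p ω - q ω| ∂μ ≤ ε)
    (W : Finset (Fin k → ℝ)) (hWmem : ∀ w ∈ W, IsProbVec w)
    (hWcover : ∀ w : Fin k → ℝ, IsProbVec w → ∃ w' ∈ W, ∑ i, |w i - w' i| ≤ δ) :
    ∃ S : Finset (Ω → ℝ),
      (∀ f ∈ S, f ∈ kMix k P) ∧
      (S.card : ℝ) ≤ (C.card : ℝ) ^ k * W.card ∧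
      ∀ f ∈ kMix k P, ∃ g ∈ S, ∫ ω, |f ω - g ω| ∂μ ≤ ε + δ := by
  refine ⟨mixtureFinset W C, fun _ hf => mixtureFinset_subset_kMix hWmem hCmem hf,
    mod_cast card_mixtureFinset_le, ?_⟩
  rintro f ⟨w, hw, p, hpP, rfl⟩
  choose q hqC hqε using fun i => hCcover (p i) (hpP i)
  obtain ⟨w', hw'W, hw'δ⟩ := hWcover w hw
  have hqP i : q i ∈ P := hCmem _ (hqC i)
  refine ⟨_, mem_mixtureFinset.2 ⟨w', hw'W, q, hqC, rfl⟩, ?_⟩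
  calc ∫ ω, |∑ i, w i * p i ω - ∑ i, w' i * q i ω| ∂μ
      ≤ ∑ i, w i * ∫ ω, |p i ω - q i ω| ∂μ + ∑ i, |w i - w' i| :=
        integral_abs_sum_mul_sub_sum_mul_le hw.1 (fun i => hInt _ (hpP i))
          (fun i => hInt _ (hqP i)) (fun i => (hP _ (hqP i)).2.1) (fun i => (hP _ (hqP i)).2.2)
    _ ≤ ε + δ := add_le_add (hw.sum_mul_le hqε) hw'δ

/-- If `P` (a set of probability densities) admits an `ε`-cover of cardinality `N₁` and
the simplex `Δ_k` admits a `δ`-cover of cardinality `N₂`, then `k`-mix(`P`) admits an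
`(ε+δ)`-cover of cardinality at most `N₁ ^ k * N₂`; i.e.
`N(k-mix(P), ε + δ) ≤ N(P, ε) ^ k * N(Δ_k, δ)`. -/
theorem kmix_cover {Ω : Type*} [MeasurableSpace Ω] (μ : Measure Ω)
    (k : ℕ) (P : Set (Ω → ℝ)) (hP : ∀ p ∈ P, IsDensity μ p)
    (hInt : ∀ p ∈ P, Integrable p μ)
    (ε δ : ℝ) (hε : 0 < ε) (hδ : 0 < δ)
    (C : Finset (Ω → ℝ)) (hCmem : ∀ q ∈ C, q ∈ P)
    (hCcover : ∀ p ∈ P, ∃ q ∈ C, ∫ ω, |p ω - q ω| ∂μ ≤ ε)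
    (W : Finset (Fin k → ℝ)) (hWmem : ∀ w ∈ W, IsProbVec w)
    (hWcover : ∀ w : Fin k → ℝ, IsProbVec w → ∃ w' ∈ W, ∑ i, |w i - w' i| ≤ δ) :
    ∃ S : Finset (Ω → ℝ),
      (∀ f ∈ S, f ∈ kMix k P) ∧
      (S.card : ℝ) ≤ (C.card : ℝ) ^ k * W.card ∧
      ∀ f ∈ kMix k P, ∃ g ∈ S, ∫ ω, |f ω - g ω| ∂μ ≤ ε + δ :=
  kmix_cover_general μ k P hP hInt ε δ C hCmem hCcover W hWmem hWcover
end

section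
/- For any probability density p on [0,1)^d, if b(n) → ∞ and k(n) → ∞ then min_{q ∈ H̃^{k(n)}_{d,b(n)}} ‖p − q‖_{L¹} → 0, i.e., the bias of the best Tucker histogram approximation of any density goes to zero. -/
open Finset MeasureTheory Filter

/-- `W` is a probability tensor: nonnegative entries summing to 1. -/
def IsProbTensor {d k : ℕ} (W : (Fin d → Fin k) → ℝ) : Prop :=
  (∀ S, 0 ≤ W S) ∧ ∑ S, W S = 1

/-- The one-dimensional histogram basis density `h_{1,b,i}` (bin indices from 0). -/
noncomputable def h1 (b : ℕ) (i : Fin b) : ℝ → ℝ :=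
  fun x => (b : ℝ) * (Set.Ico ((i : ℝ) / b) (((i : ℝ) + 1) / b)).indicator (fun _ => (1 : ℝ)) x

/-- One-dimensional histogram densities with `b` equal-width bins on `[0,1)`. -/
noncomputable def Hist1 (b : ℕ) : Set (ℝ → ℝ) :=
  {f | ∃ v : Fin b → ℝ, IsProbVec v ∧ f = fun x => ∑ i, v i * h1 b i x}

/-- Tucker histograms `H̃^k_{d,b}` on `[0,1)^d`. -/
noncomputable def TuckerHist (d b k : ℕ) : Set ((Fin d → ℝ) → ℝ) :=
  {f | ∃ W : (Fin d → Fin k) → ℝ, IsProbTensor W ∧ ∃ g : Fin d → Fin k → ℝ → ℝ,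
    (∀ i j, g i j ∈ Hist1 b) ∧
    f = fun x => ∑ S : Fin d → Fin k, W S * ∏ i, g i (S i) (x i)}

/-- The unit cube `[0,1)^d`. -/
def unitCube (d : ℕ) : Set (Fin d → ℝ) :=
  Set.univ.pi fun _ => Set.Ico (0 : ℝ) 1

/-!
Let `gridHist b f` replace `f` on each cell of the `b`-grid of `[0,1)^d` by its average there.
As `b → ∞`, `gridHist b f → f` in `L¹` for every integrable `f`: this holds for continuous
compactly supported `f` by uniform continuity, and `gridHist b` is an `L¹` contraction.
Moreover `gridHist b` acts factorwise on a Tucker form `∑_S W_S ∏_i g_{i,S_i}(x_i)`, so it maps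
Tucker histograms of rank `k` to Tucker histograms with `b` bins and the same rank `k`.
Fix `B` with `gridHist B p` close to `p`; it is a Tucker histogram of rank `B`. Once
`k(n) ≥ B`, the function `gridHist (b n) (gridHist B p)` competes in `H̃^{k(n)}_{d,b(n)}`,
and its distance to `p` is at most `‖p - gridHist B p‖₁` plus a term tending to `0`.
-/

section General

variable {α : Type*} [MeasurableSpace α] {μ : Measure α}

lemma integral_abs_sub_le_add {f g h : α → ℝ} (hf : Integrable f μ) (hg : Integrable g μ)
    (hh : Integrable h μ) :
    ∫ x, |f x - h x| ∂μ ≤ ∫ x, |f x - g x| ∂μ + ∫ x, |g x - h x| ∂μ := by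
  have hfg : Integrable (fun x => |f x - g x|) μ := (hf.sub hg).abs
  have hgh : Integrable (fun x => |g x - h x|) μ := (hg.sub hh).abs
  rw [← integral_add hfg hgh]
  exact integral_mono_of_nonneg (.of_forall fun _ => abs_nonneg _) (hfg.add hgh)
    (.of_forall fun _ => abs_sub_le _ _ _)

lemma sInf_integral_abs_sub_nonneg (p : α → ℝ) (s : Set (α → ℝ)) :
    0 ≤ sInf ((fun q => ∫ x, |p x - q x| ∂μ) '' s) :=
  Real.sInf_nonneg <| Set.forall_mem_image.2 fun _ _ => integral_nonneg fun _ => abs_nonneg _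

lemma sInf_integral_abs_sub_le (p : α → ℝ) {s : Set (α → ℝ)} {q : α → ℝ}
    (hq : q ∈ s) :
    sInf ((fun q => ∫ x, |p x - q x| ∂μ) '' s) ≤ ∫ x, |p x - q x| ∂μ :=
  csInf_le ⟨0, Set.forall_mem_image.2 fun _ _ => integral_nonneg fun _ => abs_nonneg _⟩
    ⟨q, hq, rfl⟩

variable {ι E : Type*} [Fintype ι] [MeasureSpace E] [SigmaFinite (volume : Measure E)]

lemma setIntegral_univ_pi_prod (s : ι → Set E) (f : ι → E → ℝ) :
    ∫ x in Set.univ.pi s, ∏ i, f i (x i) = ∏ i, ∫ t in s i, f i t := by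
  rw [volume_pi, Measure.restrict_pi_pi, integral_fintype_prod_eq_prod]

lemma integrableOn_univ_pi_prod {s : ι → Set E} {f : ι → E → ℝ}
    (hf : ∀ i, IntegrableOn (f i) (s i)) :
    IntegrableOn (fun x => ∏ i, f i (x i)) (Set.univ.pi s) := by
  rw [IntegrableOn, volume_pi, Measure.restrict_pi_pi]
  exact Integrable.fintype_prod hf

end General

noncomputable section

def bin (b : ℕ) (j : Fin b) : Set ℝ := Set.Ico ((j : ℝ) / b) (((j : ℝ) + 1) / b)

def cell {d : ℕ} (b : ℕ) (S : Fin d → Fin b) : Set (Fin d → ℝ) :=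
  Set.univ.pi fun i => bin b (S i)

def binHist (b : ℕ) (f : ℝ → ℝ) (t : ℝ) : ℝ := ∑ j, (∫ y in bin b j, f y) * h1 b j t

def gridHist {d : ℕ} (b : ℕ) (f : (Fin d → ℝ) → ℝ) (x : Fin d → ℝ) : ℝ :=
  ∑ S : Fin d → Fin b, (∫ y in cell b S, f y) * ∏ i, h1 b (S i) (x i)

section Bins

variable {b : ℕ}

lemma measurableSet_bin (j : Fin b) : MeasurableSet (bin b j) := measurableSet_Ico

lemma volume_real_bin (j : Fin b) : volume.real (bin b j) = 1 / b := by
  rw [bin, Real.volume_real_Ico, ← sub_div, add_sub_cancel_left, max_eq_left (by positivity)]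

lemma volume_bin_ne_top (j : Fin b) : volume (bin b j) ≠ ⊤ := by
  simp [bin, Real.volume_Ico]

lemma bin_subset_Ico (j : Fin b) : bin b j ⊆ Set.Ico 0 1 := by
  have hb : (0 : ℝ) < b := by exact_mod_cast j.pos
  have hj : (j : ℝ) + 1 ≤ b := by exact_mod_cast j.isLt
  exact Set.Ico_subset_Ico (by positivity) ((div_le_one hb).2 hj)

lemma abs_sub_lt_of_mem_bin {j : Fin b} {x y : ℝ} (hx : x ∈ bin b j) (hy : y ∈ bin b j) :
    |x - y| < 1 / b := by
  obtain ⟨hx₁, hx₂⟩ := hx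
  obtain ⟨hy₁, hy₂⟩ := hy
  rw [add_div] at hx₂ hy₂
  exact abs_sub_lt_iff.2 ⟨by linarith, by linarith⟩

lemma eq_of_mem_bin {i j : Fin b} {x : ℝ} (hi : x ∈ bin b i) (hj : x ∈ bin b j) : i = j := by
  have hb : (0 : ℝ) < b := by exact_mod_cast j.pos
  have key : ∀ i' j' : Fin b, x ∈ bin b i' → x ∈ bin b j' → ¬ i' < j' :=
    fun i' j' hi hj hij => by
    have hij : (i' : ℝ) + 1 ≤ j' := by exact_mod_cast Fin.lt_def.mp hij
    exact (hi.2.trans_le (div_le_div_of_nonneg_right hij hb.le)).not_ge hj.1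
  rcases lt_trichotomy i j with h | h | h
  exacts [(key i j hi hj h).elim, h, (key j i hj hi h).elim]

lemma pairwise_disjoint_bin : Pairwise (Function.onFun Disjoint (bin b)) :=
  fun _ _ hij => Set.disjoint_left.2 fun _ hi hj => hij (eq_of_mem_bin hi hj)

lemma iUnion_bin (hb : 0 < b) : ⋃ j, bin b j = Set.Ico 0 1 := by
  refine (Set.iUnion_subset bin_subset_Ico).antisymm fun x ⟨hx₀, hx₁⟩ => ?_
  have hbR : (0 : ℝ) < b := by exact_mod_cast hb
  have hxb : 0 ≤ x * b := by positivity
  have hlt : ⌊x * b⌋₊ < b := by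
    exact_mod_cast (Nat.floor_le hxb).trans_lt (by nlinarith : x * b < b)
  refine Set.mem_iUnion.2 ⟨⟨_, hlt⟩, (div_le_iff₀ hbR).2 (Nat.floor_le hxb), ?_⟩
  exact (lt_div_iff₀ hbR).2 (Nat.lt_floor_add_one _)

lemma setIntegral_Ico_eq_sum_bin (hb : 0 < b) {f : ℝ → ℝ}
    (hf : IntegrableOn f (Set.Ico 0 1)) :
    ∫ t in Set.Ico 0 1, f t = ∑ j, ∫ t in bin b j, f t := by
  rw [← iUnion_bin hb]
  exact integral_iUnion_fintype measurableSet_bin pairwise_disjoint_bin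
    fun j => hf.mono_set (bin_subset_Ico j)

end Bins

section Hist1

variable {b : ℕ}

lemma h1_eq_indicator (j : Fin b) : h1 b j = (bin b j).indicator fun _ => (b : ℝ) := by
  ext t
  simp only [h1, Set.indicator_apply, bin]
  split_ifs <;> simp

lemma h1_nonneg (j : Fin b) (t : ℝ) : 0 ≤ h1 b j t := by
  rw [h1_eq_indicator]
  exact Set.indicator_nonneg (fun _ _ => Nat.cast_nonneg b) t

lemma integrable_h1 (j : Fin b) : Integrable (h1 b j) := by
  rw [h1_eq_indicator, integrable_indicator_iff (measurableSet_bin j)]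
  exact integrableOn_const (volume_bin_ne_top j)

lemma setIntegral_Ico_h1 (j : Fin b) : ∫ t in Set.Ico 0 1, h1 b j t = 1 := by
  have hb : (b : ℝ) ≠ 0 := by exact_mod_cast j.pos.ne'
  rw [h1_eq_indicator, setIntegral_indicator (measurableSet_bin j),
    Set.inter_eq_right.2 (bin_subset_Ico j), setIntegral_const, volume_real_bin, smul_eq_mul,
    one_div_mul_cancel hb]

lemma h1_mem_hist1 (j : Fin b) : h1 b j ∈ Hist1 b := by
  classical
  refine ⟨Pi.single j 1, ⟨fun i => ?_, by simp⟩, ?_⟩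
  · by_cases h : i = j <;> simp [h]
  · ext t
    simp [Pi.single_apply]

lemma nonneg_of_mem_hist1 {f : ℝ → ℝ} (hf : f ∈ Hist1 b) (t : ℝ) : 0 ≤ f t := by
  obtain ⟨v, ⟨hv, -⟩, rfl⟩ := hf
  exact Finset.sum_nonneg fun j _ => mul_nonneg (hv j) (h1_nonneg j t)

lemma integrable_of_mem_hist1 {f : ℝ → ℝ} (hf : f ∈ Hist1 b) : Integrable f := by
  obtain ⟨v, -, rfl⟩ := hf
  exact integrable_finsetSum _ fun j _ => (integrable_h1 j).const_mul (v j)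

lemma setIntegral_Ico_of_mem_hist1 {f : ℝ → ℝ} (hf : f ∈ Hist1 b) :
    ∫ t in Set.Ico 0 1, f t = 1 := by
  obtain ⟨v, ⟨-, hv⟩, rfl⟩ := hf
  rw [integral_finsetSum _ fun j _ => ((integrable_h1 j).const_mul (v j)).integrableOn]
  simpa only [integral_const_mul, setIntegral_Ico_h1, mul_one] using hv

lemma binHist_mem_hist1 (hb : 0 < b) {f : ℝ → ℝ} (hf₀ : ∀ t, 0 ≤ f t)
    (hf : IntegrableOn f (Set.Ico 0 1)) (hf₁ : ∫ t in Set.Ico 0 1, f t = 1) :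
    binHist b f ∈ Hist1 b :=
  ⟨fun j => ∫ y in bin b j, f y,
    ⟨fun j => setIntegral_nonneg (measurableSet_bin j) fun t _ => hf₀ t,
      by rw [← setIntegral_Ico_eq_sum_bin hb hf, hf₁]⟩, rfl⟩

end Hist1

section Cells

variable {d b : ℕ}

lemma measurableSet_cell (S : Fin d → Fin b) : MeasurableSet (cell b S) :=
  .univ_pi fun i => measurableSet_bin (S i)

lemma volume_real_cell (S : Fin d → Fin b) : volume.real (cell b S) = ((b : ℝ) ^ d)⁻¹ := by
  rw [measureReal_def, cell, volume_pi_pi, ENNReal.toReal_prod]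
  simp only [← measureReal_def, volume_real_bin, Finset.prod_const, Finset.card_univ,
    Fintype.card_fin, one_div, inv_pow]

lemma volume_cell_ne_top (S : Fin d → Fin b) : volume (cell b S) ≠ ⊤ := by
  rw [cell, volume_pi_pi]
  exact ENNReal.prod_ne_top fun i _ => volume_bin_ne_top (S i)

lemma measurableSet_unitCube : MeasurableSet (unitCube d) :=
  .univ_pi fun _ => measurableSet_Ico

lemma volume_unitCube : volume (unitCube d) = 1 := by
  simp [unitCube, volume_pi_pi]

lemma volume_real_unitCube : volume.real (unitCube d) = 1 := by
  simp [measureReal_def, volume_unitCube]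

lemma cell_subset_unitCube (S : Fin d → Fin b) : cell b S ⊆ unitCube d :=
  Set.pi_mono fun i _ => bin_subset_Ico (S i)

lemma eq_of_mem_cell {S T : Fin d → Fin b} {x : Fin d → ℝ} (hS : x ∈ cell b S)
    (hT : x ∈ cell b T) : S = T :=
  funext fun i => eq_of_mem_bin (hS i trivial) (hT i trivial)

lemma iUnion_cell (hb : 0 < b) : ⋃ S, cell b S = unitCube d := by
  refine (Set.iUnion_subset cell_subset_unitCube).antisymm fun x hx => ?_
  have hbin : ∀ i, ∃ j, x i ∈ bin b j := fun i =>
    Set.mem_iUnion.1 ((iUnion_bin hb).symm ▸ hx i trivial)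
  choose S hS using hbin
  exact Set.mem_iUnion.2 ⟨S, fun i _ => hS i⟩

lemma setIntegral_unitCube_eq_sum_cell (hb : 0 < b) {f : (Fin d → ℝ) → ℝ}
    (hf : IntegrableOn f (unitCube d)) :
    ∫ x in unitCube d, f x = ∑ S : Fin d → Fin b, ∫ x in cell b S, f x := by
  rw [← iUnion_cell hb]
  exact integral_iUnion_fintype measurableSet_cell
    (fun _ _ hST => Set.disjoint_left.2 fun _ hS hT => hST (eq_of_mem_cell hS hT))
    fun S => hf.mono_set (cell_subset_unitCube S)

lemma dist_lt_of_mem_cell (hb : 0 < b) {S : Fin d → Fin b} {x y : Fin d → ℝ}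
    (hx : x ∈ cell b S) (hy : y ∈ cell b S) : dist x y < 1 / b :=
  (dist_pi_lt_iff (by positivity)).2 fun i =>
    (Real.dist_eq _ _).trans_lt (abs_sub_lt_of_mem_bin (hx i trivial) (hy i trivial))

lemma prod_h1_eq_indicator (S : Fin d → Fin b) (x : Fin d → ℝ) :
    ∏ i, h1 b (S i) (x i) = (cell b S).indicator (fun _ => (b : ℝ) ^ d) x := by
  simp only [h1_eq_indicator]
  by_cases hx : x ∈ cell b S
  · rw [Set.indicator_of_mem hx,
      Finset.prod_congr rfl fun i _ => Set.indicator_of_mem (hx i trivial) _, Finset.prod_const,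
      Finset.card_univ, Fintype.card_fin]
  · obtain ⟨i, hi⟩ : ∃ i, x i ∉ bin b (S i) := by simpa [cell] using hx
    rw [Set.indicator_of_notMem hx,
      Finset.prod_eq_zero (Finset.mem_univ i) (Set.indicator_of_notMem hi _)]

end Cells

section GridHist

variable {d b : ℕ}

lemma gridHist_eq_of_mem_cell (f : (Fin d → ℝ) → ℝ) {S : Fin d → Fin b}
    {x : Fin d → ℝ} (hx : x ∈ cell b S) :
    gridHist b f x = (b : ℝ) ^ d * ∫ y in cell b S, f y := by
  rw [gridHist, Finset.sum_eq_single S (fun T _ hTS => ?_) (by simp), prod_h1_eq_indicator,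
    Set.indicator_of_mem hx, mul_comm]
  rw [prod_h1_eq_indicator, Set.indicator_of_notMem fun hxT => hTS (eq_of_mem_cell hxT hx),
    mul_zero]

lemma integrable_gridHist (f : (Fin d → ℝ) → ℝ) : Integrable (gridHist b f) := by
  refine integrable_finsetSum _ fun S _ => Integrable.const_mul ?_ _
  simp only [prod_h1_eq_indicator]
  exact (integrable_indicator_iff (measurableSet_cell S)).2
    (integrableOn_const (volume_cell_ne_top S))

lemma gridHist_sub {f g : (Fin d → ℝ) → ℝ} (hf : IntegrableOn f (unitCube d))
    (hg : IntegrableOn g (unitCube d)) :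
    gridHist b (fun x => f x - g x) = fun x => gridHist b f x - gridHist b g x := by
  ext x
  simp only [gridHist, ← Finset.sum_sub_distrib, ← sub_mul]
  refine Finset.sum_congr rfl fun S _ => ?_
  rw [integral_sub (hf.mono_set (cell_subset_unitCube S)) (hg.mono_set (cell_subset_unitCube S))]

lemma setIntegral_cell_const (S : Fin d → Fin b) (c : ℝ) :
    ∫ _ in cell b S, c = ((b : ℝ) ^ d)⁻¹ * c := by
  rw [setIntegral_const, volume_real_cell, smul_eq_mul]

lemma integral_abs_gridHist_le (hb : 0 < b) {f : (Fin d → ℝ) → ℝ}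
    (hf : IntegrableOn f (unitCube d)) :
    ∫ x in unitCube d, |gridHist b f x| ≤ ∫ x in unitCube d, |f x| := by
  have hbd : (0 : ℝ) < (b : ℝ) ^ d := by positivity
  rw [setIntegral_unitCube_eq_sum_cell hb (integrable_gridHist f).abs.integrableOn,
    setIntegral_unitCube_eq_sum_cell hb hf.abs]
  refine Finset.sum_le_sum fun S _ => ?_
  calc ∫ x in cell b S, |gridHist b f x|
      = ∫ _ in cell b S, |(b : ℝ) ^ d * ∫ y in cell b S, f y| :=
        setIntegral_congr_fun (measurableSet_cell S) fun x hx => by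
          rw [gridHist_eq_of_mem_cell f hx]
    _ = |∫ y in cell b S, f y| := by
        rw [setIntegral_cell_const, abs_mul, abs_of_pos hbd, inv_mul_cancel_left₀ hbd.ne']
    _ ≤ ∫ y in cell b S, |f y| := abs_integral_le_integral_abs

lemma abs_sub_gridHist_le (hb : 0 < b) {g : (Fin d → ℝ) → ℝ} {S : Fin d → Fin b}
    (hg : IntegrableOn g (cell b S)) {η : ℝ} {x : Fin d → ℝ} (hx : x ∈ cell b S)
    (hη : ∀ y ∈ cell b S, |g x - g y| ≤ η) : |g x - gridHist b g x| ≤ η := by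
  have hbd : (0 : ℝ) < (b : ℝ) ^ d := by positivity
  have hconst : IntegrableOn (fun _ => g x) (cell b S) :=
    integrableOn_const (volume_cell_ne_top S)
  calc |g x - gridHist b g x|
      = |(b : ℝ) ^ d * ∫ y in cell b S, (g x - g y)| := by
        rw [gridHist_eq_of_mem_cell g hx, integral_sub hconst hg, setIntegral_cell_const,
          mul_sub, mul_inv_cancel_left₀ hbd.ne']
    _ = (b : ℝ) ^ d * |∫ y in cell b S, (g x - g y)| := by rw [abs_mul, abs_of_pos hbd]
    _ ≤ (b : ℝ) ^ d * ∫ _ in cell b S, η := by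
        gcongr
        exact abs_integral_le_integral_abs.trans (setIntegral_mono_on (hconst.sub hg).abs
          (integrableOn_const (volume_cell_ne_top S)) (measurableSet_cell S) hη)
    _ = η := by rw [setIntegral_cell_const, mul_inv_cancel_left₀ hbd.ne']

end GridHist

section Approximation

variable {d b : ℕ}

lemma integral_abs_sub_gridHist_le (hb : 0 < b) {f g : (Fin d → ℝ) → ℝ}
    (hf : IntegrableOn f (unitCube d)) (hg : IntegrableOn g (unitCube d)) {η : ℝ}
    (hη : ∀ S : Fin d → Fin b, ∀ x ∈ cell b S, ∀ y ∈ cell b S, |g x - g y| ≤ η) :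
    ∫ x in unitCube d, |f x - gridHist b f x| ≤
      2 * (∫ x in unitCube d, |f x - g x|) + η := by
  have hPf := (integrable_gridHist (b := b) f).integrableOn (s := unitCube d)
  have hPg := (integrable_gridHist (b := b) g).integrableOn (s := unitCube d)
  have hosc : ∫ x in unitCube d, |g x - gridHist b g x| ≤ η := by
    refine (setIntegral_mono_on (hg.sub hPg).abs (integrableOn_const (by simp [volume_unitCube]))
      measurableSet_unitCube fun x hx => ?_).trans_eq
        (by rw [setIntegral_const, volume_real_unitCube, one_smul])
    obtain ⟨S, hxS⟩ := Set.mem_iUnion.1 ((iUnion_cell hb).symm ▸ hx)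
    exact abs_sub_gridHist_le hb (hg.mono_set (cell_subset_unitCube S)) hxS (hη S x hxS)
  have hcontr : ∫ x in unitCube d, |gridHist b g x - gridHist b f x| ≤
      ∫ x in unitCube d, |f x - g x| := by
    have h := integral_abs_gridHist_le (b := b) hb (f := fun x => g x - f x) (hg.sub hf)
    simpa only [gridHist_sub hg hf, abs_sub_comm (g _)] using h
  calc ∫ x in unitCube d, |f x - gridHist b f x|
      ≤ (∫ x in unitCube d, |f x - g x|) + ((∫ x in unitCube d, |g x - gridHist b g x|) +
          ∫ x in unitCube d, |gridHist b g x - gridHist b f x|) :=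
        (integral_abs_sub_le_add hf hg hPf).trans
          (add_le_add le_rfl (integral_abs_sub_le_add hg hPg hPf))
    _ ≤ 2 * (∫ x in unitCube d, |f x - g x|) + η := by linarith

theorem tendsto_integral_abs_sub_gridHist {f : (Fin d → ℝ) → ℝ}
    (hf : IntegrableOn f (unitCube d)) :
    Tendsto (fun b => ∫ x in unitCube d, |f x - gridHist b f x|) atTop (nhds 0) := by
  refine tendsto_order.2 ⟨fun a ha => .of_forall fun b =>
    ha.trans_le (integral_nonneg fun _ => abs_nonneg _), fun ε hε => ?_⟩
  have hF := hf.integrable_indicator measurableSet_unitCube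
  obtain ⟨g, hg_supp, hfg, hg_cont, hg⟩ :=
    hF.exists_hasCompactSupport_integral_sub_le (by positivity : 0 < ε / 4)
  obtain ⟨δ, hδ, hgδ⟩ := Metric.uniformContinuous_iff.1
    (hg_supp.uniformContinuous_of_continuous hg_cont) (ε / 4) (by positivity)
  have hfg' : ∫ x in unitCube d, |f x - g x| ≤ ε / 4 :=
    calc ∫ x in unitCube d, |f x - g x|
        = ∫ x in unitCube d, ‖(unitCube d).indicator f x - g x‖ :=
          setIntegral_congr_fun measurableSet_unitCube fun x hx => by
            rw [Set.indicator_of_mem hx, Real.norm_eq_abs]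
      _ ≤ ∫ x, ‖(unitCube d).indicator f x - g x‖ :=
          setIntegral_le_integral (hF.sub hg).norm (.of_forall fun _ => norm_nonneg _)
      _ ≤ ε / 4 := hfg
  filter_upwards [eventually_gt_atTop ⌈δ⁻¹⌉₊] with b hb
  have hb₀ : 0 < b := (Nat.zero_le _).trans_lt hb
  have hbδ : 1 / (b : ℝ) < δ := by
    rw [one_div]
    exact inv_lt_of_inv_lt₀ hδ ((Nat.le_ceil _).trans_lt (by exact_mod_cast hb))
  calc ∫ x in unitCube d, |f x - gridHist b f x|
      ≤ 2 * (∫ x in unitCube d, |f x - g x|) + ε / 4 :=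
        integral_abs_sub_gridHist_le hb₀ hf hg.integrableOn fun S x hx y hy =>
          (hgδ ((dist_lt_of_mem_cell hb₀ hx hy).trans hbδ)).le
    _ < ε := by linarith

end Approximation

section Tucker

variable {d b : ℕ}

lemma gridHist_sum_mul_prod {k : ℕ} (W : (Fin d → Fin k) → ℝ)
    {g : Fin d → Fin k → ℝ → ℝ} (hg : ∀ i j, Integrable (g i j)) :
    gridHist b (fun x => ∑ S, W S * ∏ i, g i (S i) (x i)) =
      fun x => ∑ S, W S * ∏ i, binHist b (g i (S i)) (x i) := by
  classical
  have hcell : ∀ T : Fin d → Fin b, ∫ y in cell b T, ∑ S, W S * ∏ i, g i (S i) (y i) =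
      ∑ S, W S * ∏ i, ∫ t in bin b (T i), g i (S i) t := fun T => by
    rw [integral_finsetSum _ fun S _ =>
      (integrableOn_univ_pi_prod fun i => (hg i (S i)).integrableOn).const_mul _]
    simp only [integral_const_mul, cell, setIntegral_univ_pi_prod]
  ext x
  simp only [gridHist, hcell, binHist, Fintype.prod_sum, Finset.sum_mul, Finset.mul_sum]
  rw [Finset.sum_comm]
  refine Finset.sum_congr rfl fun S _ => Finset.sum_congr rfl fun T _ => ?_
  rw [Finset.prod_mul_distrib, mul_assoc]

lemma gridHist_mem_tuckerHist (hb : 0 < b) {p : (Fin d → ℝ) → ℝ} (hp₀ : ∀ x, 0 ≤ p x)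
    (hp : IntegrableOn p (unitCube d)) (hp₁ : ∫ x in unitCube d, p x = 1) :
    gridHist b p ∈ TuckerHist d b b :=
  ⟨fun S => ∫ y in cell b S, p y,
    ⟨fun S => setIntegral_nonneg (measurableSet_cell S) fun x _ => hp₀ x,
      by rw [← setIntegral_unitCube_eq_sum_cell hb hp, hp₁]⟩,
    fun _ j => h1 b j, fun _ j => h1_mem_hist1 j, rfl⟩

lemma gridHist_mem_tuckerHist_of_mem (hb : 0 < b) {B k : ℕ} {q : (Fin d → ℝ) → ℝ}
    (hq : q ∈ TuckerHist d B k) : gridHist b q ∈ TuckerHist d b k := by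
  obtain ⟨W, hW, g, hg, rfl⟩ := hq
  rw [gridHist_sum_mul_prod W fun i j => integrable_of_mem_hist1 (hg i j)]
  exact ⟨W, hW, fun i j => binHist b (g i j), fun i j => binHist_mem_hist1 hb
    (nonneg_of_mem_hist1 (hg i j)) (integrable_of_mem_hist1 (hg i j)).integrableOn
    (setIntegral_Ico_of_mem_hist1 (hg i j)), rfl⟩

lemma tuckerHist_mono (hb : 0 < b) {k k' : ℕ} (hk : k ≤ k') :
    TuckerHist d b k ⊆ TuckerHist d b k' := by
  rintro _ ⟨W, ⟨hW₀, hW₁⟩, g, hg, rfl⟩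
  set e : Fin k → Fin k' := Fin.castLE hk
  have he : Function.Injective e := Fin.castLE_injective hk
  have hE : Function.Injective fun (S : Fin d → Fin k) i => e (S i) :=
    fun S T h => funext fun i => he (congrFun h i)
  set W' := Function.extend (fun (S : Fin d → Fin k) i => e (S i)) W 0
  -- The new factors only meet zero core weights, so any member of `Hist1 b` will do.
  set g' : Fin d → Fin k' → ℝ → ℝ :=
    fun i => Function.extend e (g i) fun _ => h1 b ⟨0, hb⟩
  have hW'_zero : ∀ S ∉ Set.range fun (S : Fin d → Fin k) i => e (S i), W' S = 0 :=
    fun S hS => by simp [W', Function.extend_apply' _ _ _ (by simpa using hS)]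
  refine ⟨W', ⟨fun S => ?_, ?_⟩, g', fun i j => ?_, ?_⟩
  · by_cases hS : S ∈ Set.range fun (S : Fin d → Fin k) i => e (S i)
    · obtain ⟨T, rfl⟩ := hS
      simpa [W', hE.extend_apply] using hW₀ T
    · exact (hW'_zero S hS).ge
  · rw [← hW₁]
    exact (Fintype.sum_of_injective _ hE _ _ hW'_zero fun T => (hE.extend_apply _ _ _).symm).symm
  · by_cases hj : j ∈ Set.range e
    · obtain ⟨j, rfl⟩ := hj
      simpa [g', he.extend_apply] using hg i j
    · simpa [g', Function.extend_apply' _ _ _ (by simpa using hj)] using h1_mem_hist1 _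
  · ext x
    refine Fintype.sum_of_injective _ hE _ _ (fun S hS => by simp [hW'_zero S hS]) fun T => ?_
    simp [W', g', hE.extend_apply, he.extend_apply]

end Tucker

end

theorem tucker_hist_bias_tendsto_zero_general (d : ℕ)
    (p : (Fin d → ℝ) → ℝ) (hnonneg : ∀ x, 0 ≤ p x)
    (hint : ∫ x in unitCube d, p x = 1)
    (b k : ℕ → ℕ) (hb : Tendsto b atTop atTop) (hk : Tendsto k atTop atTop) :
    Tendsto (fun n =>
        sInf ((fun q => ∫ x in unitCube d, |p x - q x|) '' TuckerHist d (b n) (k n)))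
      atTop (nhds 0) := by
  have hp : IntegrableOn p (unitCube d) := .of_integral_ne_zero (by rw [hint]; exact one_ne_zero)
  refine tendsto_order.2 ⟨fun a ha => .of_forall fun n =>
    ha.trans_le (sInf_integral_abs_sub_nonneg p _), fun ε hε => ?_⟩
  obtain ⟨B, hpB, hB⟩ := ((tendsto_integral_abs_sub_gridHist hp).eventually
    (gt_mem_nhds (half_pos hε))).and (eventually_gt_atTop 0) |>.exists
  set q := gridHist B p
  have hq : q ∈ TuckerHist d B B := gridHist_mem_tuckerHist hB hnonneg hp hint
  have hqlim :=
    (tendsto_integral_abs_sub_gridHist (integrable_gridHist (b := B) p).integrableOn).comp hb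
  filter_upwards [hqlim.eventually (gt_mem_nhds (half_pos hε)), hb.eventually_gt_atTop 0,
    hk.eventually_ge_atTop B] with n hqn hbn hkn
  have hmem : gridHist (b n) q ∈ TuckerHist d (b n) (k n) :=
    tuckerHist_mono hbn hkn (gridHist_mem_tuckerHist_of_mem hbn hq)
  calc _ ≤ ∫ x in unitCube d, |p x - gridHist (b n) q x| := sInf_integral_abs_sub_le p hmem
    _ ≤ (∫ x in unitCube d, |p x - q x|) + ∫ x in unitCube d, |q x - gridHist (b n) q x| :=
        integral_abs_sub_le_add hp (integrable_gridHist p).integrableOn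
          (integrable_gridHist q).integrableOn
    _ < ε := by rw [Function.comp_apply] at hqn; linarith

/-- The bias of the best Tucker histogram approximation of any density on `[0,1)^d`
goes to zero when `b(n) → ∞` and `k(n) → ∞`. -/
theorem tucker_hist_bias_tendsto_zero (d : ℕ) (hd : 0 < d)
    (p : (Fin d → ℝ) → ℝ) (hmeas : Measurable p) (hnonneg : ∀ x, 0 ≤ p x)
    (hint : ∫ x in unitCube d, p x = 1)
    (b k : ℕ → ℕ) (hb : Tendsto b atTop atTop) (hk : Tendsto k atTop atTop) :
    Tendsto (fun n =>
        sInf ((fun q => ∫ x in unitCube d, |p x - q x|) '' TuckerHist d (b n) (k n)))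
      atTop (nhds 0) :=
  tucker_hist_bias_tendsto_zero_general d p hnonneg hint b k hb hk
end
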